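/- For every f ∈ L one has the two-sided bound ∫_Y f d(μκ₀) ≤ ρ(f) ≤ ∫_X f^C dμ̄; in particular the left-hand side is > −∞ and the right-hand side is < ∞, so ρ(f) is finite. -/

import Mathlib

open MeasureTheory ProbabilityTheory
open scoped ENNReal

noncomputable section

/-- The positive part of an extended real number, as an element of `ℝ≥0∞`. -/
def EReal.posPart (x : EReal) : ℝ≥0∞ := (max x 0).abs

/-- The signed integral of an `EReal`-valued function, with the convention `∞ - ∞ = -∞`
(note that in `EReal` one has `⊤ - ⊤ = ⊥`). -/
def sint {α : Type*} [MeasurableSpace α] (μ : Measure α) (f : α → EReal) : EReal :=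
  ((∫⁻ a, (f a).posPart ∂μ : ℝ≥0∞) : EReal) - ((∫⁻ a, (-(f a)).posPart ∂μ : ℝ≥0∞) : EReal)

/-- The weak optimal transport cost `inf_{κ ∈ ker(μ,ν)} ∫ C(x, κ(x)) μ(dx)`,
with the convention `inf ∅ = ∞`. -/
def wotCost {X Y : Type*} [MeasurableSpace X] [MeasurableSpace Y]
    (μ : Measure X) (C : X → Measure Y → ℝ≥0∞) (ν : Measure Y) : ℝ≥0∞ :=
  ⨅ (κ : Kernel X Y) (_ : IsMarkovKernel κ) (_ : μ.bind κ = ν), ∫⁻ x, C x (κ x) ∂μ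

/-- The risk measure with weak optimal transport penalty. -/
def rho {X Y : Type*} [MeasurableSpace X] [MeasurableSpace Y]
    (μ : Measure X) (C : X → Measure Y → ℝ≥0∞) (f : Y → EReal) : EReal :=
  ⨆ (ν : Measure Y) (_ : IsProbabilityMeasure ν), (sint ν f - (wotCost μ C ν : EReal))

/-- The `C`-transform `f^C(x) = sup_{ϑ ∈ P(Y)} ( ∫ f dϑ − C(x,ϑ) )`. -/
def Ctrans {X Y : Type*} [MeasurableSpace X] [MeasurableSpace Y]
    (C : X → Measure Y → ℝ≥0∞) (f : Y → EReal) (x : X) : EReal :=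
  ⨆ (ϑ : Measure Y) (_ : IsProbabilityMeasure ϑ), (sint ϑ f - (C x ϑ : EReal))

/-- Membership in the set `L`: `f` is Borel measurable, `∫ f d(μκ₀) > −∞` and
`∫ f^C dμ̄ < ∞` (here `ν₀` plays the role of `μκ₀`; note that the lower Lebesgue integral
used in `sint` is defined for arbitrary, not necessarily Borel measurable, functions, which
corresponds to integration of the universally measurable function `f^C` with respect to the
extension `μ̄` of `μ` to the universal σ-algebra). -/
def memL {X Y : Type*} [MeasurableSpace X] [MeasurableSpace Y]
    (μ : Measure X) (ν₀ : Measure Y) (C : X → Measure Y → ℝ≥0∞) (f : Y → EReal) : Prop :=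
  Measurable f ∧ ⊥ < sint ν₀ f ∧ sint μ (Ctrans C f) < ⊤

/-! The lower bound tests the supremum defining `ρ` with `ν = μκ₀`, which costs nothing because
`κ₀` is itself a zero-cost kernel. For the upper bound fix `ν` and a kernel `κ` with `μκ = ν`.
Disintegrating along `κ`, `∫ f dν - ∫ C(x, κ(x)) μ(dx)` is at most
`∫ (∫ f dκ(x) - C(x, κ(x))) μ(dx)`, and the integrand is at most `f^C(x)`; taking the infimum
over `κ` and then the supremum over `ν` gives `ρ(f) ≤ ∫ f^C dμ̄`. -/

namespace EReal

lemma posPart_eq_toENNReal (x : EReal) : x.posPart = x.toENNReal := by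
  induction x with
  | bot => simp [posPart]
  | top => simp [posPart]
  | coe r => rcases le_total r 0 with hr | hr <;> simp [posPart, hr, abs_def]

lemma posPart_mono : Monotone EReal.posPart := fun x y hxy => by
  simpa only [posPart_eq_toENNReal] using toENNReal_le_toENNReal hxy

lemma measurable_posPart : Measurable EReal.posPart := by
  simpa only [funext posPart_eq_toENNReal] using measurable_ereal_toENNReal

lemma posPart_coe_sub_coe (a d : ℝ≥0∞) : ((a : EReal) - d).posPart = a - d := by
  rw [posPart_eq_toENNReal, toENNReal_sub (coe_ennreal_nonneg d), toENNReal_coe, toENNReal_coe]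

lemma posPart_neg_coe_sub_coe (a : ℝ≥0∞) {d : ℝ≥0∞} (hd : d ≠ ⊤) :
    (-((a : EReal) - d)).posPart = d - a := by
  rw [neg_sub (.inl (coe_ennreal_ne_bot a)) (.inr (by simpa using hd)), add_comm,
    ← sub_eq_add_neg, posPart_coe_sub_coe]

lemma coe_sub_coe_eq_of_add_eq {A D P N : ℝ≥0∞} (hD : D ≠ ⊤) (hN : N ≠ ⊤)
    (h : P + D = A + N) : (A : EReal) - D = P - N := by
  lift D to NNReal using hD
  lift N to NNReal using hN
  rcases eq_or_ne A ⊤ with rfl | hA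
  · have hP : P = ⊤ := by simpa using h
    simp [hP, coe_nnreal_eq_coe_real]
  · have hP : P ≠ ⊤ := by
      rintro rfl
      exact hA (by simpa [eq_comm (a := ⊤)] using h)
    lift A to NNReal using hA
    lift P to NNReal using hP
    have h' : (P : ℝ) + D = A + N := by exact_mod_cast h
    simp only [coe_nnreal_eq_coe_real, ← coe_sub]
    congr 1
    linarith

lemma sub_coe_sub_coe (z : EReal) (p q : ℝ≥0∞) :
    z - (p : EReal) - (q : EReal) = z - ((p + q : ℝ≥0∞) : EReal) := by
  rw [sub_eq_add_neg, sub_eq_add_neg, sub_eq_add_neg, add_assoc, coe_ennreal_add,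
    neg_add (.inl (coe_ennreal_ne_bot p)) (.inr (coe_ennreal_ne_bot q)), sub_eq_add_neg]

lemma sub_coe_iInf_le {ι : Sort*} {x R : EReal} {c : ι → ℝ≥0∞}
    (h : ∀ i, x - (c i : EReal) ≤ R) : x - ((⨅ i, c i : ℝ≥0∞) : EReal) ≤ R := by
  rcases eq_or_ne (⨅ i, c i) ⊤ with hc | hc
  · simp [hc]
  have hcont : ContinuousAt (fun t : ℝ≥0∞ => x - (t : EReal)) (⨅ i, c i) :=
    ContinuousAt.comp (f := fun t : ℝ≥0∞ => (x, -(t : EReal)))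
      (continuousAt_add (.inr (by simpa using hc)) (.inr (by simp)))
      (continuous_const.prodMk (continuous_neg.comp continuous_coe_ennreal_ereal)).continuousAt
  rw [Antitone.map_iInf_of_continuousAt hcont
    (fun s t hst => sub_le_sub le_rfl (coe_ennreal_le_coe_ennreal_iff.mpr hst)) (sub_top x)]
  exact iSup_le h

end EReal

section SignedIntegral

variable {α : Type*} [MeasurableSpace α] (μ : Measure α)

lemma sint_mono {g h : α → EReal} (hgh : ∀ x, g x ≤ h x) : sint μ g ≤ sint μ h :=
  EReal.sub_le_sub
    (EReal.coe_ennreal_le_coe_ennreal_iff.mpr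
      (lintegral_mono fun x => EReal.posPart_mono (hgh x)))
    (EReal.coe_ennreal_le_coe_ennreal_iff.mpr
      (lintegral_mono fun x => EReal.posPart_mono (EReal.neg_le_neg_iff.mpr (hgh x))))

lemma sint_coe_sub_coe {a d : α → ℝ≥0∞} (ha : Measurable a) (hd : Measurable d)
    (hd_fin : ∫⁻ x, d x ∂μ ≠ ⊤) :
    sint μ (fun x => (a x : EReal) - d x) = (∫⁻ x, a x ∂μ : ℝ≥0∞) - (∫⁻ x, d x ∂μ : ℝ≥0∞) := by
  have hd_ae : ∀ᵐ x ∂μ, d x ≠ ⊤ := (ae_lt_top hd hd_fin).mono fun _ => ne_of_lt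
  have hneg : ∫⁻ x, (-((a x : EReal) - d x)).posPart ∂μ = ∫⁻ x, d x - a x ∂μ :=
    lintegral_congr_ae (hd_ae.mono fun x hx => EReal.posPart_neg_coe_sub_coe _ hx)
  simp only [sint, EReal.posPart_coe_sub_coe, hneg]
  refine (EReal.coe_sub_coe_eq_of_add_eq hd_fin
    (ne_top_of_le_ne_top hd_fin (lintegral_mono fun x => tsub_le_self)) ?_).symm
  rw [← lintegral_add_right _ hd, ← lintegral_add_left ha]
  congr with x
  rw [tsub_add_eq_max, add_tsub_eq_max]

lemma coe_lintegral_sub_le_sint {a d : α → ℝ≥0∞} (ha : Measurable a) (hd : Measurable d) :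
    ((∫⁻ x, a x ∂μ : ℝ≥0∞) : EReal) - (∫⁻ x, d x ∂μ : ℝ≥0∞) ≤
      sint μ (fun x => (a x : EReal) - d x) := by
  rcases eq_or_ne (∫⁻ x, d x ∂μ) ⊤ with hd_top | hd_fin
  · simp [hd_top]
  · exact (sint_coe_sub_coe μ ha hd hd_fin).ge

lemma sint_bind {β : Type*} [MeasurableSpace β] (κ : Kernel α β) {f : β → EReal}
    (hf : Measurable f) :
    sint (μ.bind κ) f = ((∫⁻ x, ∫⁻ y, (f y).posPart ∂κ x ∂μ : ℝ≥0∞) : EReal) -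
      (∫⁻ x, ∫⁻ y, (-(f y)).posPart ∂κ x ∂μ : ℝ≥0∞) := by
  have hf_pos : Measurable fun y => (f y).posPart := EReal.measurable_posPart.comp hf
  have hf_neg : Measurable fun y => (-(f y)).posPart := EReal.measurable_posPart.comp hf.neg
  rw [sint, Measure.lintegral_bind κ.measurable.aemeasurable hf_pos.aemeasurable,
    Measure.lintegral_bind κ.measurable.aemeasurable hf_neg.aemeasurable]

end SignedIntegral

section WeakTransport

variable {X Y : Type*} [MeasurableSpace X] [MeasurableSpace Y] (μ : Measure X)
  (C : X → Measure Y → ℝ≥0∞) (f : Y → EReal)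

lemma wotCost_bind_eq_zero {κ : Kernel X Y} [IsMarkovKernel κ] (hκ : ∀ᵐ x ∂μ, C x (κ x) = 0) :
    wotCost μ C (μ.bind κ) = 0 :=
  nonpos_iff_eq_zero.mp <| iInf₂_le_of_le κ inferInstance <|
    iInf_le_of_le rfl ((lintegral_congr_ae hκ).trans lintegral_zero).le

lemma sint_sub_wotCost_le_rho (ν : Measure Y) [IsProbabilityMeasure ν] :
    sint ν f - wotCost μ C ν ≤ rho μ C f :=
  le_iSup₂ (f := fun (ν : Measure Y) (_ : IsProbabilityMeasure ν) =>
    sint ν f - (wotCost μ C ν : EReal)) ν ‹_›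

lemma sint_sub_le_Ctrans (x : X) (ϑ : Measure Y) [IsProbabilityMeasure ϑ] :
    sint ϑ f - C x ϑ ≤ Ctrans C f x :=
  le_iSup₂ (f := fun (ϑ : Measure Y) (_ : IsProbabilityMeasure ϑ) =>
    sint ϑ f - (C x ϑ : EReal)) ϑ ‹_›

variable {C f}

lemma sint_bind_sub_le_sint_Ctrans (hC : Measurable fun p : X × Measure Y => C p.1 p.2)
    (hf : Measurable f) (κ : Kernel X Y) [IsMarkovKernel κ] :
    sint (μ.bind κ) f - (∫⁻ x, C x (κ x) ∂μ : ℝ≥0∞) ≤ sint μ (Ctrans C f) := by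
  have hc : Measurable fun x => C x (κ x) := hC.comp (measurable_id.prodMk κ.measurable)
  have hp : Measurable fun x => ∫⁻ y, (f y).posPart ∂κ x :=
    (EReal.measurable_posPart.comp hf).lintegral_kernel
  have hn : Measurable fun x => ∫⁻ y, (-(f y)).posPart ∂κ x :=
    (EReal.measurable_posPart.comp hf.neg).lintegral_kernel
  calc sint (μ.bind κ) f - (∫⁻ x, C x (κ x) ∂μ : ℝ≥0∞)
      = ((∫⁻ x, ∫⁻ y, (f y).posPart ∂κ x ∂μ : ℝ≥0∞) : EReal) -
          (∫⁻ x, (∫⁻ y, (-(f y)).posPart ∂κ x + C x (κ x)) ∂μ : ℝ≥0∞) := by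
        rw [sint_bind μ κ hf, EReal.sub_coe_sub_coe, lintegral_add_left hn]
    _ ≤ sint μ fun x => ((∫⁻ y, (f y).posPart ∂κ x : ℝ≥0∞) : EReal) -
          (∫⁻ y, (-(f y)).posPart ∂κ x + C x (κ x) : ℝ≥0∞) :=
        coe_lintegral_sub_le_sint μ hp (hn.add hc)
    _ ≤ sint μ (Ctrans C f) := sint_mono μ fun x => by
        rw [← EReal.sub_coe_sub_coe]
        exact sint_sub_le_Ctrans C f x (κ x)

lemma rho_le_sint_Ctrans (hC : Measurable fun p : X × Measure Y => C p.1 p.2)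
    (hf : Measurable f) : rho μ C f ≤ sint μ (Ctrans C f) :=
  iSup₂_le fun _ _ => EReal.sub_coe_iInf_le fun κ => EReal.sub_coe_iInf_le fun _ =>
    EReal.sub_coe_iInf_le fun hκν => hκν ▸ sint_bind_sub_le_sint_Ctrans μ hC hf κ

end WeakTransport

theorem rho_two_sided_bound_general
    {X Y : Type*} [MeasurableSpace X]
    [MeasurableSpace Y]
    (μ : Measure X) [IsProbabilityMeasure μ]
    (C : X → Measure Y → ℝ≥0∞)
    (hC : Measurable fun p : X × Measure Y => C p.1 p.2)
    (κ₀ : Kernel X Y) [IsMarkovKernel κ₀]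
    (hκ₀ : ∀ᵐ x ∂μ, C x (κ₀ x) = 0)
    (f : Y → EReal) (hf : memL μ (μ.bind κ₀) C f) :
    sint (μ.bind κ₀) f ≤ rho μ C f ∧ rho μ C f ≤ sint μ (Ctrans C f)
    ∧ ⊥ < sint (μ.bind κ₀) f ∧ sint μ (Ctrans C f) < ⊤
    ∧ ⊥ < rho μ C f ∧ rho μ C f < ⊤ := by
  obtain ⟨hf_meas, hf_bot, hf_top⟩ := hf
  have hlower : sint (μ.bind κ₀) f ≤ rho μ C f := by
    simpa [wotCost_bind_eq_zero μ C hκ₀] using sint_sub_wotCost_le_rho μ C f (μ.bind κ₀)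
  have hupper : rho μ C f ≤ sint μ (Ctrans C f) := rho_le_sint_Ctrans μ hC hf_meas
  exact ⟨hlower, hupper, hf_bot, hf_top, hf_bot.trans_le hlower, hupper.trans_lt hf_top⟩

/-- For every `f ∈ L` one has the two-sided bound
`∫_Y f d(μκ₀) ≤ ρ(f) ≤ ∫_X f^C dμ̄`; in particular the left-hand side is `> −∞` and the
right-hand side is `< ∞`, so `ρ(f)` is finite. -/
theorem rho_two_sided_bound
    {X Y : Type*} [MeasurableSpace X] [StandardBorelSpace X]
    [MeasurableSpace Y] [StandardBorelSpace Y]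
    (μ : Measure X) [IsProbabilityMeasure μ]
    (C : X → Measure Y → ℝ≥0∞)
    (hC : Measurable fun p : X × Measure Y => C p.1 p.2)
    (κ₀ : Kernel X Y) [IsMarkovKernel κ₀]
    (hκ₀ : ∀ᵐ x ∂μ, C x (κ₀ x) = 0)
    (f : Y → EReal) (hf : memL μ (μ.bind κ₀) C f) :
    sint (μ.bind κ₀) f ≤ rho μ C f ∧ rho μ C f ≤ sint μ (Ctrans C f)
    ∧ ⊥ < sint (μ.bind κ₀) f ∧ sint μ (Ctrans C f) < ⊤
    ∧ ⊥ < rho μ C f ∧ rho μ C f < ⊤ :=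
  rho_two_sided_bound_general μ C hC κ₀ hκ₀ f hf

end
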